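/- Let A ∈ ℂ^{n×n}, B ∈ ℂ^{n×m}, C ∈ ℂ^{p×n}, D ∈ ℂ^{p×m}, let γ > 0 and ϖ_l > 0 be real, let P be an n×n complex Hermitian matrix, let Q be an n×n complex Hermitian positive definite matrix, and let Ψ_l := [[−1, 0], [0, ϖ_l²]]. Suppose the Hermitian (n+m)×(n+m) matrix M := [A B; I 0]* (Φ ⊗ P + Ψ_l ⊗ Q) [A B; I 0] + [C D; 0 I]* [[I_p, 0], [0, −γ²I_m]] [C D; 0 I] is negative definite. Then for every ω ∈ ℝ with |ω| ≤ ϖ_l such that iωI_n − A is invertible, and for every nonzero u ∈ ℂᵐ, one has ‖(C(iωI_n − A)^{−1}B + D)u‖ < γ‖u‖. -/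

import Mathlib

open Matrix Complex MeasureTheory
open scoped ComplexOrder

/-- The Kronecker product `Ψ ⊗ Q` of a 2×2 matrix with an n×n matrix, written
as a 2×2 block matrix. -/
noncomputable def kron2 {n : ℕ} (Ψ : Matrix (Fin 2) (Fin 2) ℂ)
    (Q : Matrix (Fin n) (Fin n) ℂ) : Matrix (Fin n ⊕ Fin n) (Fin n ⊕ Fin n) ℂ :=
  Matrix.fromBlocks (Ψ 0 0 • Q) (Ψ 0 1 • Q) (Ψ 1 0 • Q) (Ψ 1 1 • Q)

/-- `Φ = [[0, 1], [1, 0]]`. -/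
noncomputable def PhiMat : Matrix (Fin 2) (Fin 2) ℂ := !![0, 1; 1, 0]

/-- The low-frequency weight `Ψ_l = [[−1, 0], [0, ϖ_l²]]`. -/
noncomputable def PsiL (ϖl : ℝ) : Matrix (Fin 2) (Fin 2) ℂ :=
  !![(-1 : ℂ), 0; 0, ((ϖl ^ 2 : ℝ) : ℂ)]

/-- A complex matrix is negative definite if it is Hermitian and `v*Mv < 0` for
all `v ≠ 0`. -/
def NegDefinite {k : Type*} [Fintype k] (M : Matrix k k ℂ) : Prop :=
  M.IsHermitian ∧ ∀ v : k → ℂ, v ≠ 0 → (star v ⬝ᵥ M.mulVec v).re < 0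

lemma star_sum_elim {α β : Type*} (a : α → ℂ) (b : β → ℂ) :
    star (Sum.elim a b) = Sum.elim (star a) (star b) := by
  funext i; cases i <;> rfl

lemma quad_fromBlocks {k l : Type*} [Fintype k] [Fintype l]
    (W : Matrix k k ℂ) (X : Matrix k l ℂ) (Y : Matrix l k ℂ) (Z : Matrix l l ℂ)
    (a : k → ℂ) (b : l → ℂ) :
    star (Sum.elim a b) ⬝ᵥ (Matrix.fromBlocks W X Y Z) *ᵥ (Sum.elim a b)
      = star a ⬝ᵥ (W *ᵥ a) + star a ⬝ᵥ (X *ᵥ b) + star b ⬝ᵥ (Y *ᵥ a)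
        + star b ⬝ᵥ (Z *ᵥ b) := by
  have h1 : (Sum.elim a b) ∘ Sum.inl = a := rfl
  have h2 : (Sum.elim a b) ∘ Sum.inr = b := rfl
  rw [Matrix.fromBlocks_mulVec, h1, h2, star_sum_elim]
  show (star a ⊕ᵥ star b) ⬝ᵥ _ = _
  rw [sumElim_dotProduct_sumElim, dotProduct_add, dotProduct_add]
  ring

lemma conj_quad {k l : Type*} [Fintype k] [Fintype l] (L : Matrix k l ℂ) (S : Matrix k k ℂ)
    (v : l → ℂ) : star v ⬝ᵥ (Lᴴ * S * L) *ᵥ v = star (L *ᵥ v) ⬝ᵥ S *ᵥ (L *ᵥ v) := by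
  simp only [Matrix.star_mulVec, Matrix.dotProduct_mulVec, Matrix.vecMul_vecMul,
    Matrix.mul_assoc]

lemma re_star_dot {k : Type*} [Fintype k] (y : k → ℂ) :
    (star y ⬝ᵥ y).re = ∑ i, ‖y i‖ ^ 2 := by
  rw [dotProduct, Complex.re_sum]
  refine Finset.sum_congr rfl fun i _ => ?_
  simp [Pi.star_apply, ← Complex.normSq_eq_norm_sq, Complex.normSq, RCLike.star_def,
    Complex.mul_re]

/-- Low-frequency case of the gKYP lemma: the LMI with weight
`Ψ_l = [[−1, 0], [0, ϖ_l²]]` implies that the transfer function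
`G(iω) = C(iωI − A)⁻¹B + D` satisfies `‖G(iω)u‖ < γ‖u‖` for all nonzero `u`
on the band `|ω| ≤ ϖ_l`. -/
theorem gKYP_lowFreq_bound {n m p : ℕ}
    (A : Matrix (Fin n) (Fin n) ℂ) (B : Matrix (Fin n) (Fin m) ℂ)
    (C : Matrix (Fin p) (Fin n) ℂ) (D : Matrix (Fin p) (Fin m) ℂ)
    (γ ϖl : ℝ) (hγ : 0 < γ) (hϖl : 0 < ϖl)
    (P : Matrix (Fin n) (Fin n) ℂ) (hP : P.IsHermitian)
    (Q : Matrix (Fin n) (Fin n) ℂ) (hQ : Q.PosDef)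
    (hM : NegDefinite
      ((Matrix.fromBlocks A B (1 : Matrix (Fin n) (Fin n) ℂ) (0 : Matrix (Fin n) (Fin m) ℂ))ᴴ
          * (kron2 PhiMat P + kron2 (PsiL ϖl) Q)
          * Matrix.fromBlocks A B (1 : Matrix (Fin n) (Fin n) ℂ) (0 : Matrix (Fin n) (Fin m) ℂ)
        + (Matrix.fromBlocks C D (0 : Matrix (Fin m) (Fin n) ℂ) (1 : Matrix (Fin m) (Fin m) ℂ))ᴴ
            * Matrix.fromBlocks (1 : Matrix (Fin p) (Fin p) ℂ) (0 : Matrix (Fin p) (Fin m) ℂ)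
                (0 : Matrix (Fin m) (Fin p) ℂ) (-((γ : ℂ) ^ 2) • (1 : Matrix (Fin m) (Fin m) ℂ))
            * Matrix.fromBlocks C D (0 : Matrix (Fin m) (Fin n) ℂ) (1 : Matrix (Fin m) (Fin m) ℂ)))
    (ω : ℝ) (hfreq : |ω| ≤ ϖl)
    (hinv : IsUnit ((Complex.I * ω) • (1 : Matrix (Fin n) (Fin n) ℂ) - A))
    (u : EuclideanSpace ℂ (Fin m)) (hu : u ≠ 0) :
    ‖Matrix.toEuclideanLin
        (C * ((Complex.I * ω) • (1 : Matrix (Fin n) (Fin n) ℂ) - A)⁻¹ * B + D) u‖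
      < γ * ‖u‖ := by
  set R : Matrix (Fin n) (Fin n) ℂ := (Complex.I * ω) • (1 : Matrix (Fin n) (Fin n) ℂ) - A with hR
  set uf : Fin m → ℂ := (WithLp.equiv 2 (Fin m → ℂ)) u with hufdef
  have huf : uf ≠ 0 := fun h => hu (by
    apply (WithLp.equiv 2 (Fin m → ℂ)).injective
    exact h.trans (by simp))
  set x : Fin n → ℂ := R⁻¹ *ᵥ (B *ᵥ uf) with hxdef
  have hdet : IsUnit R.det := (Matrix.isUnit_iff_isUnit_det R).mp hinv
  have hRx : R *ᵥ x = B *ᵥ uf := by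
    rw [hxdef, Matrix.mulVec_mulVec, Matrix.mul_nonsing_inv R hdet, Matrix.one_mulVec]
  have hAx : A *ᵥ x + B *ᵥ uf = (Complex.I * ω) • x := by
    have : ((Complex.I * ω) • (1 : Matrix (Fin n) (Fin n) ℂ)) *ᵥ x - A *ᵥ x = B *ᵥ uf := by
      rw [← Matrix.sub_mulVec, ← hR, hRx]
    rw [Matrix.smul_mulVec, Matrix.one_mulVec] at this
    rw [← this]; abel
  set g : Fin p → ℂ := (C * R⁻¹ * B + D) *ᵥ uf with hgdef
  have hCx : C *ᵥ x + D *ᵥ uf = g := by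
    rw [hgdef, Matrix.add_mulVec, hxdef, Matrix.mulVec_mulVec, Matrix.mulVec_mulVec,
      Matrix.mul_assoc]
  set v : Fin n ⊕ Fin m → ℂ := Sum.elim x uf with hvdef
  have hv : v ≠ 0 := by
    intro h
    apply huf
    funext i
    have := congrFun h (Sum.inr i)
    exact this
  -- images under the block matrices
  set L1 := Matrix.fromBlocks A B (1 : Matrix (Fin n) (Fin n) ℂ) (0 : Matrix (Fin n) (Fin m) ℂ)
  set L2 := Matrix.fromBlocks C D (0 : Matrix (Fin m) (Fin n) ℂ) (1 : Matrix (Fin m) (Fin m) ℂ)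
  have hL1 : L1 *ᵥ v = Sum.elim ((Complex.I * ω) • x) x := by
    rw [Matrix.fromBlocks_mulVec]
    have h1 : v ∘ Sum.inl = x := rfl
    have h2 : v ∘ Sum.inr = uf := rfl
    rw [h1, h2, hAx, Matrix.one_mulVec, Matrix.zero_mulVec, add_zero]
  have hL2 : L2 *ᵥ v = Sum.elim g uf := by
    rw [Matrix.fromBlocks_mulVec]
    have h1 : v ∘ Sum.inl = x := rfl
    have h2 : v ∘ Sum.inr = uf := rfl
    rw [h1, h2, hCx, Matrix.zero_mulVec, Matrix.one_mulVec, zero_add]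
  -- the quadratic form value
  have hMlt := hM.2 v hv
  set s : ℂ := star x ⬝ᵥ P *ᵥ x with hsdef
  set t : ℂ := star x ⬝ᵥ Q *ᵥ x with htdef
  have hstar_smul : star ((Complex.I * ω) • x) = (-(Complex.I * ω)) • star x := by
    funext i
    simp [Pi.star_apply, Pi.smul_apply, smul_eq_mul, _root_.map_mul, Complex.conj_ofReal]
  have key : (star v ⬝ᵥ (L1ᴴ * (kron2 PhiMat P + kron2 (PsiL ϖl) Q) * L1
        + L2ᴴ * Matrix.fromBlocks (1 : Matrix (Fin p) (Fin p) ℂ) 0 0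
          (-((γ : ℂ) ^ 2) • (1 : Matrix (Fin m) (Fin m) ℂ)) * L2) *ᵥ v)
      = ((ϖl : ℂ)^2 - (ω : ℂ)^2) * t + (star g ⬝ᵥ g - (γ : ℂ)^2 * (star uf ⬝ᵥ uf)) := by
    rw [Matrix.add_mulVec, dotProduct_add, conj_quad, conj_quad, hL1, hL2]
    have hkP : kron2 PhiMat P = Matrix.fromBlocks 0 P P 0 := by
      simp [kron2, PhiMat]
    have hkQ : kron2 (PsiL ϖl) Q = Matrix.fromBlocks (-Q) 0 0 (((ϖl : ℂ)^2) • Q) := by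
      simp [kron2, PsiL]
    rw [hkP, hkQ]
    rw [Matrix.add_mulVec, dotProduct_add, quad_fromBlocks, quad_fromBlocks, quad_fromBlocks]
    simp only [Matrix.zero_mulVec, dotProduct_zero, Matrix.neg_mulVec, dotProduct_neg,
      Matrix.smul_mulVec, Matrix.one_mulVec, Matrix.mulVec_smul,
      dotProduct_smul, smul_dotProduct, hstar_smul, smul_eq_mul, zero_add, add_zero]
    rw [← hsdef, ← htdef]
    have hconj : star (Complex.I * (ω : ℂ)) = -(Complex.I * ω) := by
      simp [RCLike.star_def, _root_.map_mul, Complex.conj_ofReal]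
    ring_nf
    rw [Complex.I_sq]
    ring
  rw [key] at hMlt
  -- real parts
  have ht0 : 0 ≤ t := hQ.posSemidef.dotProduct_mulVec_nonneg x
  have htre : 0 ≤ t.re ∧ t.im = 0 := by
    rw [Complex.le_def] at ht0
    exact ⟨by simpa using ht0.1, by simpa using ht0.2.symm⟩
  have hband : (0:ℝ) ≤ ϖl^2 - ω^2 := by
    nlinarith [abs_nonneg ω, _root_.sq_abs ω, hϖl.le]
  have hterm1 : 0 ≤ ((((ϖl : ℂ)^2 - (ω : ℂ)^2) * t)).re := by
    have : (((ϖl : ℂ)^2 - (ω : ℂ)^2) * t).re = (ϖl^2 - ω^2) * t.re := by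
      have h1 : ((ϖl : ℂ)^2 - (ω : ℂ)^2) = ((ϖl^2 - ω^2 : ℝ) : ℂ) := by push_cast; ring
      rw [h1, Complex.re_ofReal_mul]
    rw [this]
    exact mul_nonneg hband htre.1
  have hre2 : (star g ⬝ᵥ g - (γ : ℂ)^2 * (star uf ⬝ᵥ uf)).re
      = (star g ⬝ᵥ g).re - γ^2 * (star uf ⬝ᵥ uf).re := by
    rw [Complex.sub_re]
    congr 1
    have h1 : ((γ : ℂ)^2) = ((γ^2 : ℝ) : ℂ) := by push_cast; ring
    rw [h1, Complex.re_ofReal_mul]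
  rw [Complex.add_re, hre2] at hMlt
  have hgu : (star g ⬝ᵥ g).re < γ^2 * (star uf ⬝ᵥ uf).re := by linarith
  -- convert to norms
  have hnormg : ‖Matrix.toEuclideanLin (C * R⁻¹ * B + D) u‖^2 = (star g ⬝ᵥ g).re := by
    rw [Matrix.toEuclideanLin_apply, re_star_dot]
    rw [EuclideanSpace.norm_eq, Real.sq_sqrt (by positivity)]
    rfl
  have hnormu : ‖u‖^2 = (star uf ⬝ᵥ uf).re := by
    rw [re_star_dot, EuclideanSpace.norm_eq, Real.sq_sqrt (by positivity)]
    rfl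
  have hfin : ‖Matrix.toEuclideanLin (C * R⁻¹ * B + D) u‖^2 < (γ * ‖u‖)^2 := by
    rw [hnormg, mul_pow, hnormu]
    exact hgu
  exact lt_of_pow_lt_pow_left₀ 2 (by positivity) hfin
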